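/- Tangent addition formulas: for x, y ∈ ℂ and nonzero u, v ∈ ℂ, assuming the series defining sin_{s,t}(x,u), cos_{s,t}(x,u), sin_{s,t}(y,v) and cos_{s,t}(y,v) converge absolutely, and that cos_{s,t}(x,u) ≠ 0 and cos_{s,t}(y,v) ≠ 0: (1) if 1 − tan_{s,t}(x,u)·tan_{s,t}(y,v) ≠ 0, then tan_{s,t}(x ⊕_{u,v} y) = (tan_{s,t}(x,u) + tan_{s,t}(y,v))/(1 − tan_{s,t}(x,u)·tan_{s,t}(y,v)); (2) if 1 + tan_{s,t}(x,u)·tan_{s,t}(y,v) ≠ 0, then tan_{s,t}(x ⊖_{u,v} y) = (tan_{s,t}(x,u) − tan_{s,t}(y,v))/(1 + tan_{s,t}(x,u)·tan_{s,t}(y,v)). -/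

import Mathlib

/-!
For `ε` with `ε ^ 2 = -1`, the twisted exponential splits as Euler's formula
`exp_{s,t}(εz, u) = cos_{s,t}(z, u) + ε sin_{s,t}(z, u)`. The Cauchy product of
`exp_{s,t}(x, u)` and `exp_{s,t}(y, v)` is `Σ (x ⊕_{u,v} y)^{(n)} / {n}_{s,t}!`, because
`{n choose k}_{s,t} = {n}! / ({k}! {n-k}!)` is exactly the coefficient the product produces;
as `(εx ⊕_{u,v} εy)^{(n)} = εⁿ (x ⊕_{u,v} y)^{(n)}`, splitting this series into even and odd
terms gives `cos(x ⊕ y) + ε sin(x ⊕ y) = (cos x + ε sin x)(cos y + ε sin y)`.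
Taking `ε = ±i` yields the addition formulas for `cos` and `sin`, whose quotient is the tangent
formula; the subtraction formula is the addition formula at `-y`.
-/

open scoped BigOperators

noncomputable section

/-- The Lucas sequence `{n}_{s,t}`. -/
def lucasSeq (s t : ℂ) : ℕ → ℂ
  | 0 => 0
  | 1 => 1
  | n + 2 => s * lucasSeq s t (n + 1) + t * lucasSeq s t n

/-- The Lucastorial `{n}_{s,t}!`. -/
def lucasFact (s t : ℂ) : ℕ → ℂ
  | 0 => 1
  | n + 1 => lucasFact s t n * lucasSeq s t (n + 1)

/-- The Lucasnomial coefficient `{n choose k}_{s,t}`. -/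
def lucasBinom (s t : ℂ) (n k : ℕ) : ℂ :=
  lucasFact s t n / (lucasFact s t k * lucasFact s t (n - k))

/-- The `(u,v)`-deformed Lucasnomial power `(x ⊕_{u,v} y)^{(n)}`. -/
def lucasPow (s t u v x y : ℂ) (n : ℕ) : ℂ :=
  ∑ k ∈ Finset.range (n + 1),
    lucasBinom s t n k * u ^ ((n - k).choose 2) * v ^ (k.choose 2) * x ^ (n - k) * y ^ k

/-- The Lucas-derivative with respect to the roots `p = φ`, `q = φ'`. -/
def lucasDeriv (p q : ℂ) (f : ℂ → ℂ) (x : ℂ) : ℂ :=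
  (f (p * x) - f (q * x)) / ((p - q) * x)

/-- The Lucas-derivative, extended by `0` at `0`, as an operator suitable for iteration. -/
def lucasDeriv0 (p q : ℂ) (f : ℂ → ℂ) : ℂ → ℂ :=
  fun x => if x = 0 then 0 else (f (p * x) - f (q * x)) / ((p - q) * x)

/-- The Lucas-Pantograph exponential `exp_{s,t}(z,u)`. -/
def lucasExp (s t u z : ℂ) : ℂ :=
  ∑' n : ℕ, u ^ (n.choose 2) * z ^ n / lucasFact s t n

/-- The Lucas-Pantograph sine `sin_{s,t}(z,u)`. -/
def lucasSin (s t u z : ℂ) : ℂ :=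
  ∑' n : ℕ, (-1 : ℂ) ^ n * u ^ ((2 * n + 1).choose 2) * z ^ (2 * n + 1) / lucasFact s t (2 * n + 1)

/-- The Lucas-Pantograph cosine `cos_{s,t}(z,u)`. -/
def lucasCos (s t u z : ℂ) : ℂ :=
  ∑' n : ℕ, (-1 : ℂ) ^ n * u ^ ((2 * n).choose 2) * z ^ (2 * n) / lucasFact s t (2 * n)

/-- The Lucas-Pantograph tangent. -/
def lucasTan (s t u z : ℂ) : ℂ := lucasSin s t u z / lucasCos s t u z

/-- The `(u,v)`-binomial sine. -/
def lucasSinBin (s t u v x y : ℂ) : ℂ :=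
  ∑' n : ℕ, (-1 : ℂ) ^ n * lucasPow s t u v x y (2 * n + 1) / lucasFact s t (2 * n + 1)

/-- The `(u,v)`-binomial cosine. -/
def lucasCosBin (s t u v x y : ℂ) : ℂ :=
  ∑' n : ℕ, (-1 : ℂ) ^ n * lucasPow s t u v x y (2 * n) / lucasFact s t (2 * n)

/-- The `(u,v)`-binomial tangent. -/
def lucasTanBin (s t u v x y : ℂ) : ℂ :=
  lucasSinBin s t u v x y / lucasCosBin s t u v x y

open Finset

theorem HasSum.even_add_mul_odd_of_sq_eq_neg_one {𝕜 : Type*} [NormedField 𝕜] [CompleteSpace 𝕜]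
    {ε a : 𝕜} {w : ℕ → 𝕜} (hε : ε ^ 2 = -1) (h : HasSum (fun m => ε ^ m * w m) a) :
    (∑' k, (-1) ^ k * w (2 * k)) + ε * ∑' k, (-1) ^ k * w (2 * k + 1) = a := by
  have hdouble : Function.Injective (2 * · : ℕ → ℕ) := mul_right_injective₀ (two_ne_zero' ℕ)
  have hodd : Function.Injective (2 * · + 1 : ℕ → ℕ) := (add_left_injective 1).comp hdouble
  rw [← h.tsum_eq, ← tsum_even_add_odd (f := fun m => ε ^ m * w m)
    (h.summable.comp_injective hdouble) (h.summable.comp_injective hodd), ← tsum_mul_left]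
  congr 1 <;> refine tsum_congr fun k => ?_
  · rw [pow_mul, hε]
  · rw [pow_add, pow_mul, hε]
    ring

def lucasExpTerm (s t u z : ℂ) (m : ℕ) : ℂ :=
  u ^ m.choose 2 * z ^ m / lucasFact s t m

lemma lucasExp_eq_tsum (s t u z : ℂ) : lucasExp s t u z = ∑' m, lucasExpTerm s t u z m := rfl

lemma lucasFact_ne_zero {s t : ℂ} (hL : ∀ n : ℕ, 1 ≤ n → lucasSeq s t n ≠ 0) (n : ℕ) :
    lucasFact s t n ≠ 0 := by
  induction n with
  | zero => simp [lucasFact]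
  | succ n ih => exact mul_ne_zero ih (hL (n + 1) n.succ_pos)

lemma lucasPow_mul_mul (s t u v c x y : ℂ) (n : ℕ) :
    lucasPow s t u v (c * x) (c * y) n = c ^ n * lucasPow s t u v x y n := by
  rw [lucasPow, lucasPow, mul_sum]
  refine sum_congr rfl fun k hk => ?_
  rw [← pow_sub_mul_pow c (Nat.lt_succ_iff.mp (mem_range.mp hk))]
  ring

lemma sum_range_lucasExpTerm_mul {s t : ℂ} (hF : ∀ n, lucasFact s t n ≠ 0) (u v x y : ℂ) (n : ℕ) :
    ∑ k ∈ range (n + 1), lucasExpTerm s t v y k * lucasExpTerm s t u x (n - k) =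
      lucasPow s t u v x y n / lucasFact s t n := by
  rw [lucasPow, sum_div]
  refine sum_congr rfl fun k _ => ?_
  have := hF k
  have := hF (n - k)
  have := hF n
  rw [lucasExpTerm, lucasExpTerm, lucasBinom]
  field_simp

theorem hasSum_lucasPow_div_lucasFact {s t u v x y : ℂ} (hF : ∀ n, lucasFact s t n ≠ 0)
    (hx : Summable fun m => ‖lucasExpTerm s t u x m‖)
    (hy : Summable fun m => ‖lucasExpTerm s t v y m‖) :
    HasSum (fun n => lucasPow s t u v x y n / lucasFact s t n)
      (lucasExp s t u x * lucasExp s t v y) := by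
  simpa only [sum_range_lucasExpTerm_mul hF, ← lucasExp_eq_tsum, mul_comm (lucasExp s t v y)]
    using hasSum_sum_range_mul_of_summable_norm hy hx

lemma pow_mul_lucasExpTerm (s t u ε z : ℂ) (m : ℕ) :
    ε ^ m * lucasExpTerm s t u z m = lucasExpTerm s t u (ε * z) m := by
  rw [lucasExpTerm, lucasExpTerm, mul_pow]
  ring

lemma norm_lucasExpTerm_mul {ε : ℂ} (hε : ‖ε‖ = 1) (s t u z : ℂ) (m : ℕ) :
    ‖lucasExpTerm s t u (ε * z) m‖ = ‖lucasExpTerm s t u z m‖ := by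
  rw [← pow_mul_lucasExpTerm, norm_mul, norm_pow, hε, one_pow, one_mul]

lemma summable_norm_lucasExpTerm {s t u z : ℂ}
    (hsin : Summable fun n : ℕ =>
      ‖(-1 : ℂ) ^ n * u ^ ((2 * n + 1).choose 2) * z ^ (2 * n + 1) / lucasFact s t (2 * n + 1)‖)
    (hcos : Summable fun n : ℕ =>
      ‖(-1 : ℂ) ^ n * u ^ ((2 * n).choose 2) * z ^ (2 * n) / lucasFact s t (2 * n)‖) :
    Summable fun m => ‖lucasExpTerm s t u z m‖ := by
  have hsign (n : ℕ) (a : ℂ) : ‖(-1 : ℂ) ^ n * a‖ = ‖a‖ := by simp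
  apply Summable.even_add_odd
  · exact hcos.congr fun n => by rw [mul_assoc, mul_div_assoc, hsign, lucasExpTerm]
  · exact hsin.congr fun n => by rw [mul_assoc, mul_div_assoc, hsign, lucasExpTerm]

theorem lucasExp_mul_eq_lucasCos_add_mul_lucasSin {s t u z ε : ℂ} (hε : ε ^ 2 = -1)
    (h : Summable (lucasExpTerm s t u (ε * z))) :
    lucasExp s t u (ε * z) = lucasCos s t u z + ε * lucasSin s t u z := by
  have h' : HasSum (fun m => ε ^ m * lucasExpTerm s t u z m) (lucasExp s t u (ε * z)) := by
    simpa only [pow_mul_lucasExpTerm, lucasExp_eq_tsum] using h.hasSum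
  rw [← h'.even_add_mul_odd_of_sq_eq_neg_one hε, lucasCos, lucasSin]
  simp only [lucasExpTerm, mul_assoc, mul_div_assoc]

theorem lucasCosBin_add_mul_lucasSinBin {s t u v x y ε : ℂ} (hF : ∀ n, lucasFact s t n ≠ 0)
    (hε : ε ^ 2 = -1)
    (hx : Summable fun m => ‖lucasExpTerm s t u x m‖)
    (hy : Summable fun m => ‖lucasExpTerm s t v y m‖) :
    lucasCosBin s t u v x y + ε * lucasSinBin s t u v x y =
      (lucasCos s t u x + ε * lucasSin s t u x) * (lucasCos s t v y + ε * lucasSin s t v y) := by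
  have hεn : ‖ε‖ = 1 := (pow_eq_one_iff_of_nonneg (norm_nonneg ε) two_ne_zero).mp
    (by rw [← norm_pow, hε, norm_neg, norm_one])
  replace hx : Summable fun m => ‖lucasExpTerm s t u (ε * x) m‖ := by
    simpa only [norm_lucasExpTerm_mul hεn] using hx
  replace hy : Summable fun m => ‖lucasExpTerm s t v (ε * y) m‖ := by
    simpa only [norm_lucasExpTerm_mul hεn] using hy
  rw [← lucasExp_mul_eq_lucasCos_add_mul_lucasSin hε hx.of_norm,
    ← lucasExp_mul_eq_lucasCos_add_mul_lucasSin hε hy.of_norm]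
  have h := hasSum_lucasPow_div_lucasFact hF hx hy
  simp only [lucasPow_mul_mul, mul_div_assoc] at h
  rw [← h.even_add_mul_odd_of_sq_eq_neg_one hε, lucasCosBin, lucasSinBin]
  simp only [mul_div_assoc]

theorem lucasCosBin_eq_and_lucasSinBin_eq {s t u v x y : ℂ} (hF : ∀ n, lucasFact s t n ≠ 0)
    (hx : Summable fun m => ‖lucasExpTerm s t u x m‖)
    (hy : Summable fun m => ‖lucasExpTerm s t v y m‖) :
    lucasCosBin s t u v x y =
        lucasCos s t u x * lucasCos s t v y - lucasSin s t u x * lucasSin s t v y ∧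
      lucasSinBin s t u v x y =
        lucasSin s t u x * lucasCos s t v y + lucasCos s t u x * lucasSin s t v y := by
  have hI := lucasCosBin_add_mul_lucasSinBin hF Complex.I_sq hx hy
  have hJ := lucasCosBin_add_mul_lucasSinBin hF (by rw [neg_sq, Complex.I_sq]) hx hy
  constructor
  · linear_combination (hI + hJ) / 2 + lucasSin s t u x * lucasSin s t v y * Complex.I_sq
  · apply mul_left_cancel₀ (mul_ne_zero two_ne_zero Complex.I_ne_zero)
    linear_combination hI - hJ

theorem lucasTanBin_eq {s t u v x y : ℂ} (hF : ∀ n, lucasFact s t n ≠ 0)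
    (hx : Summable fun m => ‖lucasExpTerm s t u x m‖)
    (hy : Summable fun m => ‖lucasExpTerm s t v y m‖)
    (hcx : lucasCos s t u x ≠ 0) (hcy : lucasCos s t v y ≠ 0) :
    lucasTanBin s t u v x y =
      (lucasTan s t u x + lucasTan s t v y) / (1 - lucasTan s t u x * lucasTan s t v y) := by
  obtain ⟨hc, hs⟩ := lucasCosBin_eq_and_lucasSinBin_eq hF hx hy
  rw [lucasTanBin, hc, hs, lucasTan, lucasTan]
  field_simp

lemma lucasSin_neg (s t u z : ℂ) : lucasSin s t u (-z) = -lucasSin s t u z := by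
  rw [lucasSin, lucasSin, ← tsum_neg]
  exact tsum_congr fun n => by rw [Odd.neg_pow ⟨n, rfl⟩]; ring

lemma lucasCos_neg (s t u z : ℂ) : lucasCos s t u (-z) = lucasCos s t u z := by
  rw [lucasCos, lucasCos]
  exact tsum_congr fun n => by rw [Even.neg_pow ⟨n, two_mul n⟩]

lemma lucasTan_neg (s t u z : ℂ) : lucasTan s t u (-z) = -lucasTan s t u z := by
  rw [lucasTan, lucasTan, lucasSin_neg, lucasCos_neg, neg_div]

theorem lucasTan_add_sub_general (s t : ℂ)
    (hL : ∀ n : ℕ, 1 ≤ n → lucasSeq s t n ≠ 0)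
    (x y u v : ℂ)
    (hconvsx : Summable fun n : ℕ =>
      ‖(-1 : ℂ) ^ n * u ^ ((2 * n + 1).choose 2) * x ^ (2 * n + 1) / lucasFact s t (2 * n + 1)‖)
    (hconvcx : Summable fun n : ℕ =>
      ‖(-1 : ℂ) ^ n * u ^ ((2 * n).choose 2) * x ^ (2 * n) / lucasFact s t (2 * n)‖)
    (hconvsy : Summable fun n : ℕ =>
      ‖(-1 : ℂ) ^ n * v ^ ((2 * n + 1).choose 2) * y ^ (2 * n + 1) / lucasFact s t (2 * n + 1)‖)
    (hconvcy : Summable fun n : ℕ =>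
      ‖(-1 : ℂ) ^ n * v ^ ((2 * n).choose 2) * y ^ (2 * n) / lucasFact s t (2 * n)‖)
    (hcx : lucasCos s t u x ≠ 0) (hcy : lucasCos s t v y ≠ 0) :
    (1 - lucasTan s t u x * lucasTan s t v y ≠ 0 →
      lucasTanBin s t u v x y =
        (lucasTan s t u x + lucasTan s t v y) /
          (1 - lucasTan s t u x * lucasTan s t v y)) ∧
    (1 + lucasTan s t u x * lucasTan s t v y ≠ 0 →
      lucasTanBin s t u v x (-y) =
        (lucasTan s t u x - lucasTan s t v y) /
          (1 + lucasTan s t u x * lucasTan s t v y)) := by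
  have hF := lucasFact_ne_zero hL
  have hx := summable_norm_lucasExpTerm hconvsx hconvcx
  have hy := summable_norm_lucasExpTerm hconvsy hconvcy
  have hy' : Summable fun m => ‖lucasExpTerm s t v (-y) m‖ := by
    simpa only [← neg_one_mul y, norm_lucasExpTerm_mul (by simp : ‖(-1 : ℂ)‖ = 1)] using hy
  refine ⟨fun _ => lucasTanBin_eq hF hx hy hcx hcy, fun _ => ?_⟩
  rw [lucasTanBin_eq hF hx hy' hcx (by rwa [lucasCos_neg]), lucasTan_neg, ← sub_eq_add_neg,
    mul_neg, sub_neg_eq_add]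

/-- Tangent addition formulas. -/
theorem lucasTan_add_sub (s t : ℂ) (hs : s ≠ 0) (ht : t ≠ 0)
    (hL : ∀ n : ℕ, 1 ≤ n → lucasSeq s t n ≠ 0)
    (x y u v : ℂ) (hu : u ≠ 0) (hv : v ≠ 0)
    (hconvsx : Summable fun n : ℕ =>
      ‖(-1 : ℂ) ^ n * u ^ ((2 * n + 1).choose 2) * x ^ (2 * n + 1) / lucasFact s t (2 * n + 1)‖)
    (hconvcx : Summable fun n : ℕ =>
      ‖(-1 : ℂ) ^ n * u ^ ((2 * n).choose 2) * x ^ (2 * n) / lucasFact s t (2 * n)‖)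
    (hconvsy : Summable fun n : ℕ =>
      ‖(-1 : ℂ) ^ n * v ^ ((2 * n + 1).choose 2) * y ^ (2 * n + 1) / lucasFact s t (2 * n + 1)‖)
    (hconvcy : Summable fun n : ℕ =>
      ‖(-1 : ℂ) ^ n * v ^ ((2 * n).choose 2) * y ^ (2 * n) / lucasFact s t (2 * n)‖)
    (hcx : lucasCos s t u x ≠ 0) (hcy : lucasCos s t v y ≠ 0) :
    (1 - lucasTan s t u x * lucasTan s t v y ≠ 0 →
      lucasTanBin s t u v x y =
        (lucasTan s t u x + lucasTan s t v y) /
          (1 - lucasTan s t u x * lucasTan s t v y)) ∧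
    (1 + lucasTan s t u x * lucasTan s t v y ≠ 0 →
      lucasTanBin s t u v x (-y) =
        (lucasTan s t u x - lucasTan s t v y) /
          (1 + lucasTan s t u x * lucasTan s t v y)) :=
  lucasTan_add_sub_general s t hL x y u v hconvsx hconvcx hconvsy hconvcy hcx hcy
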